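/- Let G = (V,E) be a finite simple undirected graph with V nonempty and let k ≥ 5 be an integer. If G contains no k-clique, that is, no set C ⊆ V with |C| = k all of whose pairs of distinct vertices are adjacent, then the minmax value for Player 1 in the clique game Γ(G,k) is at least 1/k + 1/(4k²). -/

import Mathlib

/-- A mixed strategy on a finite strategy set `S`. -/
def IsMixedStrategy {S : Type*} [Fintype S] (σ : S → ℝ) : Prop :=
  (∀ s, 0 ≤ σ s) ∧ ∑ s, σ s = 1

/-- The minmax (threat) value for Player 1 of the three-player game with payoff `u`:
the minimum over mixed strategy profiles of Players 2 and 3 of the best-response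
payoff of Player 1 (the minimum is attained, so `sInf` is a minimum). -/
noncomputable def minmaxVal {S₁ S₂ S₃ : Type*} [Fintype S₁] [Fintype S₂] [Fintype S₃]
    (u : S₁ × S₂ × S₃ → ℝ) : ℝ :=
  sInf { v | ∃ σ₂ : S₂ → ℝ, ∃ σ₃ : S₃ → ℝ,
    IsMixedStrategy σ₂ ∧ IsMixedStrategy σ₃ ∧
    v = ⨆ a : S₁, ∑ j : S₂, ∑ k : S₃, σ₂ j * σ₃ k * u (a, j, k) }

/-- The clique game `Γ(G,k)`: Player 1 picks a label in `Fin k` and points at one of the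
two bullies (`Fin 2`); each bully picks a label in `Fin k` and a vertex of `G`.
Player 1 gets payoff 1 iff his label matches the label of the bully he points at, or the
bullies choose the same label with different vertices, or different labels with the same
vertex, or distinct non-adjacent vertices; otherwise payoff 0. -/
def cliqueGame {V : Type*} [DecidableEq V] (G : SimpleGraph V) [DecidableRel G.Adj]
    (k : ℕ) : (Fin k × Fin 2) × (Fin k × V) × (Fin k × V) → ℝ :=
  fun p =>
    if p.1.1 = (if p.1.2 = 0 then p.2.1.1 else p.2.2.1) ∨
       (p.2.1.1 = p.2.2.1 ∧ p.2.1.2 ≠ p.2.2.2) ∨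
       (p.2.1.1 ≠ p.2.2.1 ∧ p.2.1.2 = p.2.2.2) ∨
       (p.2.1.2 ≠ p.2.2.2 ∧ ¬ G.Adj p.2.1.2 p.2.2.2)
    then 1 else 0

/-!
Suppose Players 2 and 3 hold every pure reply of Player 1 below `T = 1/k + 1/(4k²)`.
Summing the replies `(x, 0)` over all labels `x` counts the event that the bullies' choices are
clique-inconsistent `k` times and everything else once, so `(k - 1) P(inconsistent) < 1/(4k)`;
and since the reply `(x, i)` wins whenever the bully pointed at uses label `x`, every label has
probability at least `m = 1 - (k - 1) T = (3k + 1)/(4k²)` for both bullies.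

Let `c x` be a vertex Player 2 plays most often with label `x`. As `G` has no `k`-clique,
`(x, c x)` and `(y, c y)` are inconsistent for some labels `x ≠ y`. The inconsistent mass
contains the same-label, different-vertex mass at `x` and at `y` and the pair
`((x, c x), (y, c y))`; because `c x` is a most likely vertex these add up to at least `m²/2`,
and `(k - 1) m²/2 ≥ 1/(4k)` once `k ≥ 5`.
-/

open Finset

section ProductExpectation

variable {S₂ S₃ : Type*} [Fintype S₂] [Fintype S₃]

def productExpect (σ₂ : S₂ → ℝ) (σ₃ : S₃ → ℝ) (f : S₂ → S₃ → ℝ) : ℝ :=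
  ∑ j, ∑ l, σ₂ j * σ₃ l * f j l

variable {σ₂ : S₂ → ℝ} {σ₃ : S₃ → ℝ}

lemma productExpect_mono (h₂ : ∀ j, 0 ≤ σ₂ j) (h₃ : ∀ l, 0 ≤ σ₃ l) {f g : S₂ → S₃ → ℝ}
    (hfg : ∀ j l, f j l ≤ g j l) : productExpect σ₂ σ₃ f ≤ productExpect σ₂ σ₃ g :=
  sum_le_sum fun j _ => sum_le_sum fun l _ =>
    mul_le_mul_of_nonneg_left (hfg j l) (mul_nonneg (h₂ j) (h₃ l))

lemma sum_productExpect {ι : Type*} (s : Finset ι) (f : ι → S₂ → S₃ → ℝ) :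
    ∑ i ∈ s, productExpect σ₂ σ₃ (f i) = productExpect σ₂ σ₃ fun j l => ∑ i ∈ s, f i j l := by
  simp only [productExpect, mul_sum]
  rw [sum_comm]
  exact sum_congr rfl fun j _ => sum_comm

lemma productExpect_const_add_mul (h₂ : ∑ j, σ₂ j = 1) (h₃ : ∑ l, σ₃ l = 1)
    (a c : ℝ) (f : S₂ → S₃ → ℝ) :
    productExpect σ₂ σ₃ (fun j l => a + c * f j l) = a + c * productExpect σ₂ σ₃ f := by
  have hexpand : ∀ j l,
      σ₂ j * σ₃ l * (a + c * f j l) = σ₂ j * σ₃ l * a + c * (σ₂ j * σ₃ l * f j l) :=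
    fun _ _ => by ring
  simp only [productExpect, hexpand, sum_add_distrib, ← sum_mul, ← mul_sum, h₂, h₃, one_mul]

lemma productExpect_fst (h₃ : ∑ l, σ₃ l = 1) (g : S₂ → ℝ) :
    productExpect σ₂ σ₃ (fun j _ => g j) = ∑ j, σ₂ j * g j := by
  simp only [productExpect, mul_right_comm _ _ (g _), ← mul_sum, h₃, mul_one]

lemma productExpect_snd (h₂ : ∑ j, σ₂ j = 1) (g : S₃ → ℝ) :
    productExpect σ₂ σ₃ (fun _ l => g l) = ∑ l, σ₃ l * g l := by
  simp only [productExpect, mul_assoc, ← mul_sum, ← sum_mul, h₂, one_mul]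

end ProductExpectation

lemma exists_isMixedStrategy (S : Type*) [Fintype S] [Nonempty S] :
    ∃ σ : S → ℝ, IsMixedStrategy σ :=
  ⟨fun _ => (Fintype.card S : ℝ)⁻¹, fun _ => by positivity, by simp⟩

lemma le_minmaxVal_of_forall_exists {S₁ S₂ S₃ : Type*} [Fintype S₁] [Fintype S₂] [Fintype S₃]
    [Nonempty S₂] [Nonempty S₃] (u : S₁ × S₂ × S₃ → ℝ) (T : ℝ)
    (h : ∀ σ₂ σ₃, IsMixedStrategy σ₂ → IsMixedStrategy σ₃ →
      ∃ a, T ≤ productExpect σ₂ σ₃ fun j l => u (a, j, l)) :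
    T ≤ minmaxVal u := by
  obtain ⟨σ₂, h₂⟩ := exists_isMixedStrategy S₂
  obtain ⟨σ₃, h₃⟩ := exists_isMixedStrategy S₃
  refine le_csInf ⟨_, σ₂, σ₃, h₂, h₃, rfl⟩ ?_
  rintro _ ⟨σ₂, σ₃, h₂, h₃, rfl⟩
  obtain ⟨a, ha⟩ := h σ₂ σ₃ h₂ h₃
  exact ha.trans (le_ciSup (f := fun a => productExpect σ₂ σ₃ fun j l => u (a, j, l))
    (Finite.bddAbove_range _) a)

lemma sum_ite_eq_or {ι : Type*} [Fintype ι] [DecidableEq ι] (i : ι) (P : Prop) [Decidable P] :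
    ∑ x, (if x = i ∨ P then (1 : ℝ) else 0) = 1 + (Fintype.card ι - 1) * if P then 1 else 0 := by
  by_cases hP : P <;> simp [hP]

lemma one_sub_mul_le_of_sum_eq_one {ι : Type*} [Fintype ι] {γ : ι → ℝ} (hγ : ∑ i, γ i = 1)
    {T : ℝ} (hT : ∀ i, γ i ≤ T) (x : ι) : 1 - (Fintype.card ι - 1) * T ≤ γ x := by
  classical
  have hrest : ∑ i ∈ univ.erase x, γ i ≤ (Fintype.card ι - 1) * T := by
    have hcard : ((univ.erase x).card : ℝ) = Fintype.card ι - 1 := by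
      rw [← card_univ, ← card_erase_add_one (mem_univ x)]
      push_cast
      ring
    simpa only [nsmul_eq_mul, hcard] using sum_le_card_nsmul (univ.erase x) γ T fun i _ => hT i
  linarith [add_sum_erase univ γ (mem_univ x)]

section Marginal

variable {ι V : Type*} [Fintype ι] [Fintype V]

def marginal (σ : ι × V → ℝ) (x : ι) : ℝ :=
  ∑ v, σ (x, v)

lemma sum_marginal (σ : ι × V → ℝ) : ∑ x, marginal σ x = ∑ p, σ p :=
  (Fintype.sum_prod_type σ).symm

lemma sum_mul_ite_fst_eq [DecidableEq ι] (σ : ι × V → ℝ) (x : ι) :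
    ∑ j, σ j * (if x = j.1 then 1 else 0) = marginal σ x := by
  rw [Fintype.sum_prod_type_right]
  simp [marginal]

lemma marginal_le_productExpect_fst [DecidableEq ι] {S₃ : Type*} [Fintype S₃]
    {σ₂ : ι × V → ℝ} {σ₃ : S₃ → ℝ} (h₂ : ∀ j, 0 ≤ σ₂ j) (h₃ : IsMixedStrategy σ₃)
    (x : ι) (P : ι × V → S₃ → Prop) [∀ j l, Decidable (P j l)] :
    marginal σ₂ x ≤ productExpect σ₂ σ₃ fun j l => if x = j.1 ∨ P j l then 1 else 0 := by
  rw [← sum_mul_ite_fst_eq, ← productExpect_fst h₃.2]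
  refine productExpect_mono h₂ h₃.1 fun j l => ?_
  split_ifs <;> simp_all

lemma marginal_le_productExpect_snd [DecidableEq ι] {S₂ : Type*} [Fintype S₂]
    {σ₂ : S₂ → ℝ} {σ₃ : ι × V → ℝ} (h₂ : IsMixedStrategy σ₂) (h₃ : ∀ l, 0 ≤ σ₃ l)
    (x : ι) (P : S₂ → ι × V → Prop) [∀ j l, Decidable (P j l)] :
    marginal σ₃ x ≤ productExpect σ₂ σ₃ fun j l => if x = l.1 ∨ P j l then 1 else 0 := by
  rw [← sum_mul_ite_fst_eq, ← productExpect_snd h₂.2]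
  refine productExpect_mono h₂.1 h₃ fun j l => ?_
  split_ifs <;> simp_all

end Marginal

section Concentration

variable {V : Type*} [Fintype V] {f g : V → ℝ} {c : V}

lemma sum_mul_le_apply_mul_sum (hf : ∀ v, f v ≤ f c) (hg : ∀ v, 0 ≤ g v) :
    ∑ v, f v * g v ≤ f c * ∑ v, g v := by
  rw [mul_sum]
  exact sum_le_sum fun v _ => mul_le_mul_of_nonneg_right (hf v) (hg v)

lemma two_mul_sum_mul_le (hf₀ : ∀ v, 0 ≤ f v) (hf : ∀ v, f v ≤ f c) (hg : ∀ v, 0 ≤ g v) :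
    2 * ∑ v, f v * g v ≤ (∑ v, f v) * g c + (∑ v, f v) * ∑ v, g v := by
  classical
  have hc : f c * g c ≤ (∑ v, f v) * g c :=
    mul_le_mul_of_nonneg_right (single_le_sum (fun v _ => hf₀ v) (mem_univ c)) (hg c)
  have hrest : ∑ v ∈ univ.erase c, f v * g v ≤ (∑ v, f v - f c) * ∑ v, g v := by
    rw [← sum_erase_eq_sub (mem_univ c), sum_mul]
    exact sum_le_sum fun v _ =>
      mul_le_mul_of_nonneg_left (single_le_sum (fun w _ => hg w) (mem_univ v)) (hf₀ v)
  have hsplit := add_sum_erase univ (fun v => f v * g v) (mem_univ c)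
  linarith [sum_mul_le_apply_mul_sum hf hg]

end Concentration

lemma sq_div_two_le_of_le {m a₁ b₁ a₂ b₂ p q : ℝ} (hm : 0 ≤ m) (ha₁ : m ≤ a₁) (hb₁ : m ≤ b₁)
    (ha₂ : m ≤ a₂) (hb₂ : m ≤ b₂) (hp : 0 ≤ p) (hpa : p ≤ a₁) (hq : 0 ≤ q) (hqb : q ≤ b₂) :
    m ^ 2 / 2 ≤ (a₁ - p) * b₁ + a₂ * (b₂ - q) / 2 + p * q := by
  have h₁ : (a₁ - p) * m ≤ (a₁ - p) * b₁ := mul_le_mul_of_nonneg_left hb₁ (by linarith)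
  have h₂ : m * (b₂ - q) ≤ a₂ * (b₂ - q) := mul_le_mul_of_nonneg_right ha₂ (by linarith)
  rcases le_or_gt m (a₁ - p) with hs | hs
  · nlinarith [mul_nonneg hp hq]
  rcases le_or_gt m (b₂ - q) with ht | ht
  · nlinarith [mul_nonneg hp hq]
  nlinarith [mul_le_mul (by linarith : m - (a₁ - p) ≤ p) (by linarith : m - (b₂ - q) ≤ q)
    (by linarith) hp]

lemma add_add_le_sum_sum {ι : Type*} [Fintype ι] {W : ι → ι → ℝ} (hW : ∀ x y, 0 ≤ W x y)
    {x y : ι} (hxy : x ≠ y) : W x x + W y y + W x y ≤ ∑ x, ∑ y, W x y := by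
  have hx := add_le_sum (fun y _ => hW x y) (mem_univ x) (mem_univ y) hxy
  have hy := single_le_sum (fun y' _ => hW y y') (mem_univ y)
  have hrows := add_le_sum (f := fun x => ∑ y, W x y) (fun x _ => sum_nonneg fun y _ => hW x y)
    (mem_univ x) (mem_univ y) hxy
  linarith

section BlockMass

variable {ι V : Type*} {σ τ : ι × V → ℝ} (B : ι × V → ι × V → Prop) [DecidableRel B]

def blockMass [Fintype V] (σ τ : ι × V → ℝ) (x y : ι) : ℝ :=
  ∑ v, ∑ w, σ (x, v) * τ (y, w) * if B (x, v) (y, w) then 1 else 0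

lemma productExpect_eq_sum_blockMass [Fintype ι] [Fintype V] :
    (productExpect σ τ fun j l => if B j l then 1 else 0) = ∑ x, ∑ y, blockMass B σ τ x y := by
  simp only [productExpect, blockMass, Fintype.sum_prod_type]
  exact sum_congr rfl fun x _ => sum_comm

lemma blockMass_term_nonneg (hσ : ∀ j, 0 ≤ σ j) (hτ : ∀ l, 0 ≤ τ l) (x y : ι) (v w : V) :
    0 ≤ σ (x, v) * τ (y, w) * if B (x, v) (y, w) then 1 else 0 :=
  mul_nonneg (mul_nonneg (hσ _) (hτ _)) (by positivity)

variable [Fintype V]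

lemma blockMass_nonneg (hσ : ∀ j, 0 ≤ σ j) (hτ : ∀ l, 0 ≤ τ l) (x y : ι) :
    0 ≤ blockMass B σ τ x y :=
  sum_nonneg fun v _ => sum_nonneg fun w _ => blockMass_term_nonneg B hσ hτ x y v w

lemma mul_le_blockMass (hσ : ∀ j, 0 ≤ σ j) (hτ : ∀ l, 0 ≤ τ l) {x y : ι} {v w : V}
    (h : B (x, v) (y, w)) :
    σ (x, v) * τ (y, w) ≤ blockMass B σ τ x y :=
  calc σ (x, v) * τ (y, w) = σ (x, v) * τ (y, w) * if B (x, v) (y, w) then 1 else 0 := by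
        rw [if_pos h, mul_one]
    _ ≤ ∑ w', σ (x, v) * τ (y, w') * if B (x, v) (y, w') then 1 else 0 :=
        single_le_sum (fun w' _ => blockMass_term_nonneg B hσ hτ x y v w') (mem_univ w)
    _ ≤ blockMass B σ τ x y :=
        single_le_sum (fun v' _ => sum_nonneg fun w' _ => blockMass_term_nonneg B hσ hτ x y v' w')
          (mem_univ v)

lemma marginal_mul_marginal_sub_le_blockMass (hσ : ∀ j, 0 ≤ σ j) (hτ : ∀ l, 0 ≤ τ l) {x : ι}
    (hdiag : ∀ v w, v ≠ w → B (x, v) (x, w)) :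
    marginal σ x * marginal τ x - ∑ v, σ (x, v) * τ (x, v) ≤ blockMass B σ τ x x := by
  classical
  have hpt : ∀ v w, σ (x, v) * τ (x, w) ≤ σ (x, v) * τ (x, w) * (if B (x, v) (x, w) then 1 else 0)
      + if v = w then σ (x, v) * τ (x, w) else 0 := by
    intro v w
    by_cases hvw : v = w
    · rw [if_pos hvw]
      linarith [blockMass_term_nonneg B hσ hτ x x v w]
    · simp [hvw, hdiag v w hvw]
  have hsum := sum_le_sum fun v (_ : v ∈ univ) => sum_le_sum fun w (_ : w ∈ univ) => hpt v w
  simp only [sum_add_distrib, sum_ite_eq, mem_univ, if_true, ← mul_sum, ← sum_mul] at hsum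
  simp only [marginal, blockMass]
  linarith

end BlockMass

theorem sq_div_two_le_productExpect_of_forall_exists {ι V : Type*} [Fintype ι] [Fintype V]
    [Nonempty V] {σ τ : ι × V → ℝ} (hσ : ∀ j, 0 ≤ σ j) (hτ : ∀ l, 0 ≤ τ l)
    (B : ι × V → ι × V → Prop) [DecidableRel B] (hdiag : ∀ x v w, v ≠ w → B (x, v) (x, w))
    (hsel : ∀ c : ι → V, ∃ x y, x ≠ y ∧ B (x, c x) (y, c y))
    {m : ℝ} (hm : 0 ≤ m) (hσm : ∀ x, m ≤ marginal σ x) (hτm : ∀ x, m ≤ marginal τ x) :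
    m ^ 2 / 2 ≤ productExpect σ τ fun j l => if B j l then 1 else 0 := by
  choose c hc using fun x => Finite.exists_max fun v => σ (x, v)
  obtain ⟨x, y, hxy, hB⟩ := hsel c
  have hthree := add_add_le_sum_sum (blockMass_nonneg B hσ hτ) hxy
  have hconc₁ : ∑ v, σ (x, v) * τ (x, v) ≤ σ (x, c x) * marginal τ x :=
    sum_mul_le_apply_mul_sum (hc x) fun v => hτ (x, v)
  have hconc₂ : 2 * ∑ v, σ (y, v) * τ (y, v) ≤
      marginal σ y * τ (y, c y) + marginal σ y * marginal τ y :=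
    two_mul_sum_mul_le (fun v => hσ (y, v)) (hc y) fun v => hτ (y, v)
  have key := sq_div_two_le_of_le hm (hσm x) (hτm x) (hσm y) (hτm y) (hσ (x, c x))
    (single_le_sum (fun v _ => hσ (x, v)) (mem_univ (c x))) (hτ (y, c y))
    (single_le_sum (fun v _ => hτ (y, v)) (mem_univ (c y)))
  rw [productExpect_eq_sum_blockMass]
  linarith [marginal_mul_marginal_sub_le_blockMass B hσ hτ (hdiag x),
    marginal_mul_marginal_sub_le_blockMass B hσ hτ (hdiag y), mul_le_blockMass B hσ hτ hB]

section CliqueGame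

variable {V : Type*} (G : SimpleGraph V)

def CliqueInconsistent {ι : Type*} (j l : ι × V) : Prop :=
  (j.1 = l.1 ∧ j.2 ≠ l.2) ∨ (j.1 ≠ l.1 ∧ j.2 = l.2) ∨ (j.2 ≠ l.2 ∧ ¬ G.Adj j.2 l.2)

instance {ι : Type*} [DecidableEq ι] [DecidableEq V] [DecidableRel G.Adj] :
    DecidableRel (CliqueInconsistent (ι := ι) G) :=
  fun _ _ => inferInstanceAs (Decidable (_ ∨ _ ∨ _))

lemma cliqueInconsistent_of_ne {ι : Type*} (x : ι) {v w : V} (h : v ≠ w) :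
    CliqueInconsistent G (x, v) (x, w) :=
  Or.inl ⟨rfl, h⟩

lemma SimpleGraph.CliqueFree.exists_cliqueInconsistent {n : ℕ} (hG : G.CliqueFree n)
    (c : Fin n → V) : ∃ x y, x ≠ y ∧ CliqueInconsistent G (x, c x) (y, c y) := by
  by_contra! hcons
  have hadj : ∀ x y, x ≠ y → G.Adj (c x) (c y) := by
    intro x y hxy
    by_contra hnadj
    have hne : c x ≠ c y := fun hc => hcons x y hxy (Or.inr (Or.inl ⟨hxy, hc⟩))
    exact hcons x y hxy (Or.inr (Or.inr ⟨hne, hnadj⟩))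
  have hinj : Function.Injective c := fun x y hc => by
    by_contra hxy
    exact (hadj x y hxy).ne hc
  exact (SimpleGraph.cliqueFree_iff.mp hG).false ⟨⟨c, fun h => hadj _ _ h⟩, hinj⟩

variable {G} [DecidableEq V] [DecidableRel G.Adj] {k : ℕ}

lemma cliqueGame_point_zero (x : Fin k) (j l : Fin k × V) :
    cliqueGame G k ((x, 0), j, l) = if x = j.1 ∨ CliqueInconsistent G j l then 1 else 0 :=
  if_congr (by simp [CliqueInconsistent]) rfl rfl

lemma cliqueGame_point_one (x : Fin k) (j l : Fin k × V) :
    cliqueGame G k ((x, 1), j, l) = if x = l.1 ∨ CliqueInconsistent G j l then 1 else 0 :=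
  if_congr (by simp [CliqueInconsistent]) rfl rfl

variable [Fintype V] {σ₂ σ₃ : Fin k × V → ℝ}

lemma sum_productExpect_cliqueGame_point_zero (h₂ : ∑ j, σ₂ j = 1) (h₃ : ∑ l, σ₃ l = 1) :
    ∑ x : Fin k, productExpect σ₂ σ₃ (fun j l => cliqueGame G k ((x, 0), j, l)) =
      1 + (k - 1) * productExpect σ₂ σ₃ fun j l => if CliqueInconsistent G j l then 1 else 0 := by
  simp only [cliqueGame_point_zero, sum_productExpect, sum_ite_eq_or, Fintype.card_fin]
  exact productExpect_const_add_mul h₂ h₃ _ _ _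

lemma marginal_le_productExpect_cliqueGame_point_zero (h₂ : ∀ j, 0 ≤ σ₂ j)
    (h₃ : IsMixedStrategy σ₃) (x : Fin k) :
    marginal σ₂ x ≤ productExpect σ₂ σ₃ fun j l => cliqueGame G k ((x, 0), j, l) := by
  simpa only [← cliqueGame_point_zero] using
    marginal_le_productExpect_fst h₂ h₃ x (CliqueInconsistent G)

lemma marginal_le_productExpect_cliqueGame_point_one (h₂ : IsMixedStrategy σ₂)
    (h₃ : ∀ l, 0 ≤ σ₃ l) (x : Fin k) :
    marginal σ₃ x ≤ productExpect σ₂ σ₃ fun j l => cliqueGame G k ((x, 1), j, l) := by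
  simpa only [← cliqueGame_point_one] using
    marginal_le_productExpect_snd h₂ h₃ x (CliqueInconsistent G)

end CliqueGame

lemma one_div_four_mul_le_of_five_le {k : ℝ} (hk : 5 ≤ k) :
    1 / (4 * k) ≤ (k - 1) * ((3 * k + 1) / (4 * k ^ 2)) ^ 2 / 2 := by
  rw [div_pow, mul_div_assoc', div_div, div_le_div_iff₀ (by positivity) (by positivity)]
  nlinarith [mul_nonneg (by linarith : (0 : ℝ) ≤ k - 5) (by positivity : (0 : ℝ) ≤ k ^ 5),
    pow_pos (by linarith : (0 : ℝ) < k) 4]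

theorem cliqueGame_exists_response_ge {V : Type*} [Fintype V] [DecidableEq V] [Nonempty V]
    {G : SimpleGraph V} [DecidableRel G.Adj] {k : ℕ} (hk : 5 ≤ k) (hG : G.CliqueFree k)
    {σ₂ σ₃ : Fin k × V → ℝ} (h₂ : IsMixedStrategy σ₂) (h₃ : IsMixedStrategy σ₃) :
    ∃ a, 1 / (k : ℝ) + 1 / (4 * (k : ℝ) ^ 2) ≤
      productExpect σ₂ σ₃ fun j l => cliqueGame G k (a, j, l) := by
  have : NeZero k := ⟨by omega⟩
  have hkR : (5 : ℝ) ≤ k := by exact_mod_cast hk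
  set T : ℝ := 1 / k + 1 / (4 * k ^ 2) with hT
  set b := productExpect σ₂ σ₃ fun j l => if CliqueInconsistent G j l then 1 else 0
  by_contra! hlt
  have hb : (k - 1) * b < 1 / (4 * k) := by
    have hlt_sum := sum_lt_sum_of_nonempty univ_nonempty fun x (_ : x ∈ univ) => hlt (x, 0)
    have hkT : ∑ _x : Fin k, T = 1 + 1 / (4 * k) := by
      rw [sum_const, card_univ, Fintype.card_fin, nsmul_eq_mul, hT]
      field_simp
    linarith [sum_productExpect_cliqueGame_point_zero (G := G) h₂.2 h₃.2]
  have hσ₂ : ∀ x, marginal σ₂ x ≤ T := fun x =>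
    (marginal_le_productExpect_cliqueGame_point_zero h₂.1 h₃ x).trans (hlt (x, 0)).le
  have hσ₃ : ∀ x, marginal σ₃ x ≤ T := fun x =>
    (marginal_le_productExpect_cliqueGame_point_one h₂ h₃.1 x).trans (hlt (x, 1)).le
  set m : ℝ := 1 - (k - 1) * T
  have hm : m = (3 * k + 1) / (4 * k ^ 2) := by
    simp only [m, hT]
    field_simp
    ring
  have hbad : m ^ 2 / 2 ≤ b := by
    refine sq_div_two_le_productExpect_of_forall_exists h₂.1 h₃.1 _ (cliqueInconsistent_of_ne G)
      hG.exists_cliqueInconsistent (by rw [hm]; positivity) (fun x => ?_) (fun x => ?_)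
    · simpa only [Fintype.card_fin] using
        one_sub_mul_le_of_sum_eq_one ((sum_marginal σ₂).trans h₂.2) hσ₂ x
    · simpa only [Fintype.card_fin] using
        one_sub_mul_le_of_sum_eq_one ((sum_marginal σ₃).trans h₃.2) hσ₃ x
  have hthreshold := one_div_four_mul_le_of_five_le hkR
  rw [← hm] at hthreshold
  linarith [mul_le_mul_of_nonneg_left hbad (by linarith : (0 : ℝ) ≤ k - 1)]

/-- If `k ≥ 5` and `G` contains no `k`-clique, the minmax value for Player 1 in the
clique game `Γ(G,k)` is at least `1/k + 1/(4k²)`. -/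
theorem cliqueGame_minmax_ge_of_no_clique (V : Type*) [Fintype V] [DecidableEq V]
    [Nonempty V] (G : SimpleGraph V) [DecidableRel G.Adj] (k : ℕ) (hk : 5 ≤ k)
    (hnoclique : ¬ ∃ C : Finset V, C.card = k ∧
      ∀ v ∈ C, ∀ w ∈ C, v ≠ w → G.Adj v w) :
    1 / (k : ℝ) + 1 / (4 * (k : ℝ) ^ 2) ≤ minmaxVal (cliqueGame G k) := by
  have : NeZero k := ⟨by omega⟩
  have hG : G.CliqueFree k := fun C hC =>
    hnoclique ⟨C, hC.card_eq, fun _ hv _ hw => hC.isClique hv hw⟩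
  exact le_minmaxVal_of_forall_exists _ _ fun _ _ h₂ h₃ =>
    cliqueGame_exists_response_ge hk hG h₂ h₃
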